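/- arXiv:1905.06387 — 2 statements merged into one kernel-verified Lean document; each statement's English description precedes it below -/
import Mathlib

section
/- Let b = 1/2 and define the weight φ(x) = (b² + x²)²/(b² x⁴) for x > 0. Then for every x > 0, the identity (1/(2φ(x)))·(d/dx)(x·φ(x)) + b/(b² + x²) − 1 = −1/2 holds. -/
open Real

noncomputable def b : ℝ := 1/2

noncomputable def φ (x : ℝ) : ℝ := (b^2 + x^2)^2 / (b^2 * x^4)

lemma hasDerivAt_mul_weight {c x : ℝ} (hc : c ≠ 0) (hx : x ≠ 0) :
    HasDerivAt (fun y => y * ((c^2 + y^2)^2 / (c^2 * y^4)))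
      ((c^2 + x^2)^2 / (c^2 * x^4) * (4 * x^2 / (c^2 + x^2) - 3)) x := by
  have hnum : HasDerivAt (fun y => (c^2 + y^2)^2) (2 * (c^2 + x^2) * (2 * x)) x := by
    simpa using (((hasDerivAt_pow 2 x).const_add (c^2)).fun_pow 2)
  have hden : HasDerivAt (fun y => c^2 * y^4) (c^2 * (4 * x^3)) x := by
    simpa using (hasDerivAt_pow 4 x).const_mul (c^2)
  refine ((hasDerivAt_id' x).mul (hnum.fun_div hden (by positivity))).congr_deriv ?_
  field_simp
  ring

lemma b_ne_zero : b ≠ 0 := by norm_num [b]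

theorem damping_L2 (x : ℝ) (hx : 0 < x) :
    (1 / (2 * φ x)) * deriv (fun y => y * φ y) x + b / (b^2 + x^2) - 1 = -(1/2) := by
  have hderiv : HasDerivAt (fun y => y * φ y) (φ x * (4 * x^2 / (b^2 + x^2) - 3)) x :=
    hasDerivAt_mul_weight b_ne_zero hx.ne'
  have hφ : φ x ≠ 0 := by unfold φ; have := b_ne_zero; positivity
  have hhalf : 1 / (2 * φ x) * (φ x * (4 * x^2 / (b^2 + x^2) - 3))
      = (4 * x^2 / (b^2 + x^2) - 3) / 2 := by
    field_simp
  rw [hderiv.deriv, hhalf]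
  -- the left side is `-5/2 + (2x² + b)/(b² + x²)`, and `b = 2b²` exactly when `b = 1/2`
  field_simp
  norm_num [b]
  ring
end

section
/- Let b = 1/2 and define ψ(x) = (b² + x²)²/(b² x²) for x > 0. Then for every x > 0, (1/(2ψ(x)))·(d/dx)(x·ψ(x)) − 2 + b/(b² + x²) = −1/2. -/
open Real

noncomputable def ψ (x : ℝ) : ℝ := (b^2 + x^2)^2 / (b^2 * x^2)

/-!
Since `x ψ(x) = (b² + x²)² / (b² x)`, one gets `(x ψ)' / (2ψ) = (3x² - b²) / (2(b² + x²))`, and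
the whole expression equals `(2b - 5b² - x²) / (2(b² + x²))`. The choice `b = 1/2` is exactly the
one for which `2b - 5b² = -b²`, so the quotient collapses to `-1/2`.
-/

theorem hasDerivAt_sq_add_sq_sq_div {c x : ℝ} (hc : c ≠ 0) (hx : x ≠ 0) :
    HasDerivAt (fun y => (c^2 + y^2)^2 / (c^2 * y))
      ((c^2 + x^2) * (3 * x^2 - c^2) / (c^2 * x^2)) x := by
  have hnum : HasDerivAt (fun y => (c^2 + y^2)^2) (2 * (c^2 + x^2) * (2 * x)) x := by
    simpa using ((hasDerivAt_pow 2 x).const_add (c^2)).fun_pow 2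
  have hden : HasDerivAt (fun y => c^2 * y) (c^2) x := by
    simpa using (hasDerivAt_id x).const_mul (c^2)
  refine (hnum.div hden (by positivity)).congr_deriv ?_
  field_simp
  ring

theorem mul_ψ_eventuallyEq {x : ℝ} (hx : x ≠ 0) :
    (fun y => y * ψ y) =ᶠ[nhds x] fun y => (b^2 + y^2)^2 / (b^2 * y) := by
  filter_upwards [eventually_ne_nhds hx] with y hy
  unfold ψ
  field_simp

theorem deriv_mul_ψ {x : ℝ} (hx : x ≠ 0) :
    deriv (fun y => y * ψ y) x = (b^2 + x^2) * (3 * x^2 - b^2) / (b^2 * x^2) := by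
  rw [(mul_ψ_eventuallyEq hx).deriv_eq,
    (hasDerivAt_sq_add_sq_sq_div (by norm_num [b]) hx).deriv]

theorem damping_H1 (x : ℝ) (hx : 0 < x) :
    (1 / (2 * ψ x)) * deriv (fun y => y * ψ y) x - 2 + b / (b^2 + x^2) = -(1/2) := by
  rw [deriv_mul_ψ hx.ne', ψ, b]
  field_simp
  ring
end
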